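/- arXiv:2412.20174 — 4 statements merged into one kernel-verified Lean document; each statement's English description precedes it below -/
import Mathlib

section
/- Let p be a prime and A a commutative ring in which p² = 0 (i.e., (p·1_A)² = 0). Let σ be a finite index type and F a multivariate polynomial over A in variables indexed by σ. Let a, b : σ → A be tuples and assume that for every i ∈ σ the value (∂F/∂xᵢ)(a) lies in the ideal p·A. Then F(a + p·b) = F(a); that is, the evaluation of F at the tuple (aᵢ + p·bᵢ)ᵢ equals the evaluation of F at a. -/
/-!
An increment `d` with `dᵢ dⱼ = 0` for all `i, j` kills every term of degree at least two in the
Taylor expansion of `F` around `a`, so `F(a + d) = F(a) + ∑ᵢ dᵢ ∂ᵢF(a)`. For `d = p·b` with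
`p² = 0`, each first-order term is `p bᵢ ∂ᵢF(a) ∈ p · pA = 0`.
-/

open MvPolynomial

namespace MvPolynomial

theorem eval_add_of_mul_eq_zero {R σ : Type*} [CommRing R] [Fintype σ] (a d : σ → R)
    (hd : ∀ i j, d i * d j = 0) (F : MvPolynomial σ R) :
    eval (a + d) F = eval a F + ∑ i, d i * eval a (pderiv i F) := by
  classical
  induction F using MvPolynomial.induction_on with
  | C c => simp
  | add f g hf hg =>
    simp only [map_add, hf, hg, mul_add, Finset.sum_add_distrib]
    ring
  | mul_X f j hf =>
    have hsq : (∑ i, d i * eval a (pderiv i f)) * d j = 0 := by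
      simp only [Finset.sum_mul, mul_right_comm _ _ (d j), hd, zero_mul, Finset.sum_const_zero]
    have hX : ∑ i, d i * eval a f * eval a (pderiv i (X j)) = d j * eval a f := by
      simp [pderiv_X, Pi.single_apply]
    simp only [pderiv_mul, map_mul, map_add, eval_X, hf, Pi.add_apply, mul_add,
      Finset.sum_add_distrib, ← mul_assoc, ← Finset.sum_mul, hX]
    linear_combination hsq

end MvPolynomial

theorem mvPolynomial_eval_indep_of_pderiv_mem_general (p : ℕ) (A : Type*) [CommRing A]
    (hp2 : (p : A) ^ 2 = 0) (σ : Type*) [Fintype σ] (F : MvPolynomial σ A) (a b : σ → A)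
    (hder : ∀ i : σ, eval a (pderiv i F) ∈ Ideal.span {(p : A)}) :
    eval (fun i => a i + (p : A) * b i) F = eval a F := by
  have hd : ∀ i j, (p : A) * b i * ((p : A) * b j) = 0 := fun i j => by
    linear_combination b i * b j * hp2
  have hfirst : ∀ i, (p : A) * b i * eval a (pderiv i F) = 0 := fun i => by
    obtain ⟨c, hc⟩ := Ideal.mem_span_singleton'.mp (hder i)
    rw [← hc]
    linear_combination b i * c * hp2
  rw [show (fun i => a i + (p : A) * b i) = a + fun i => (p : A) * b i from rfl,
    eval_add_of_mul_eq_zero a _ hd, Finset.sum_eq_zero fun i _ => hfirst i, add_zero]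

/-- If `p² = 0` in `A` and all partial derivatives of `F` at `a` lie in the ideal `pA`,
then `F(a + p·b) = F(a)`. -/
theorem mvPolynomial_eval_indep_of_pderiv_mem (p : ℕ) (hp : p.Prime) (A : Type*) [CommRing A]
    (hp2 : (p : A) ^ 2 = 0) (σ : Type*) [Fintype σ] (F : MvPolynomial σ A) (a b : σ → A)
    (hder : ∀ i : σ, eval a (pderiv i F) ∈ Ideal.span {(p : A)}) :
    eval (fun i => a i + (p : A) * b i) F = eval a F :=
  mvPolynomial_eval_indep_of_pderiv_mem_general p A hp2 σ F a b hder
end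

section
/- Let p be a prime and A a commutative ring in which p² = 0 (i.e., (p·1_A)² = 0). Let σ be a finite index type and F a multivariate polynomial over A in variables indexed by σ. Let a : σ → A be a tuple such that F(a) lies in the ideal p·A, and suppose there exists an index i₀ ∈ σ such that (∂F/∂xᵢ₀)(a) is a unit of A. Then there exists a tuple b : σ → A such that F(a + p·b) = 0, where F(a + p·b) denotes the evaluation of F at the tuple (aᵢ + p·bᵢ)ᵢ. -/
open MvPolynomial

namespace MvPolynomial

variable {σ R : Type*} [CommRing R]

theorem eval_add_single_of_sq_eq_zero [DecidableEq σ] (F : MvPolynomial σ R) (a : σ → R) (i : σ)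
    {t : R} (ht : t ^ 2 = 0) :
    eval (a + Pi.single i t) F = eval a F + t * eval a (pderiv i F) := by
  induction F using MvPolynomial.induction_on with
  | C c => simp
  | add f g hf hg => simp only [map_add, hf, hg]; ring
  | mul_X f n hf =>
    simp only [map_mul, eval_X, hf, pderiv_mul, pderiv_X, map_add, Pi.add_apply]
    by_cases hn : n = i
    · subst hn
      simp only [Pi.single_eq_same, map_one, mul_one]
      linear_combination eval a (pderiv n f) * ht
    · simp only [Pi.single_eq_of_ne hn, map_zero, mul_zero]
      ring

end MvPolynomial

theorem mvPolynomial_exists_root_of_unit_pderiv_general (p : ℕ) (A : Type*) [CommRing A]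
    (hp2 : (p : A) ^ 2 = 0) (σ : Type*) (F : MvPolynomial σ A) (a : σ → A)
    (hFa : eval a F ∈ Ideal.span {(p : A)})
    (hunit : ∃ i₀ : σ, IsUnit (eval a (pderiv i₀ F))) :
    ∃ b : σ → A, eval (fun i => a i + (p : A) * b i) F = 0 := by
  classical
  obtain ⟨i₀, u, hu⟩ := hunit
  obtain ⟨c, hc⟩ := Ideal.mem_span_singleton'.mp hFa
  -- Newton's step: a single correction in the direction `i₀` kills `F(a) = c p`.
  refine ⟨Pi.single i₀ (-(↑u⁻¹ * c)), ?_⟩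
  have hshift : (fun i => a i + (p : A) * (Pi.single i₀ (-(↑u⁻¹ * c)) : σ → A) i)
      = a + Pi.single i₀ ((p : A) * -(↑u⁻¹ * c)) := by
    ext i
    by_cases hi : i = i₀ <;> simp [hi]
  have hsq : ((p : A) * -(↑u⁻¹ * c)) ^ 2 = 0 := by rw [mul_pow, hp2, zero_mul]
  rw [hshift, eval_add_single_of_sq_eq_zero F a i₀ hsq, ← hu]
  linear_combination -hc - c * (p : A) * u.inv_mul

/-- A Hensel-type statement: if `p² = 0` in `A`, `F(a) ∈ pA`, and some partial derivative
of `F` at `a` is a unit, then there is a tuple `b` with `F(a + p·b) = 0`. -/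
theorem mvPolynomial_exists_root_of_unit_pderiv (p : ℕ) (hp : p.Prime) (A : Type*) [CommRing A]
    (hp2 : (p : A) ^ 2 = 0) (σ : Type*) [Fintype σ] (F : MvPolynomial σ A) (a : σ → A)
    (hFa : eval a F ∈ Ideal.span {(p : A)})
    (hunit : ∃ i₀ : σ, IsUnit (eval a (pderiv i₀ F))) :
    ∃ b : σ → A, eval (fun i => a i + (p : A) * b i) F = 0 :=
  mvPolynomial_exists_root_of_unit_pderiv_general p A hp2 σ F a hFa hunit
end

section
/- Let p be a prime and B a commutative ring in which p² = 0 (i.e., (p·1_B)² = 0). Let q : B → B/pB denote the quotient map modulo the principal ideal pB generated by p·1_B. Let I be an ideal of B, let I₀ denote the image ideal q(I) in B/pB, and suppose: (i) there exists G ∈ I such that I₀ is the principal ideal generated by q(G), and (ii) for every x ∈ B, if p·x ∈ I then q(x) ∈ I₀. Then I is the principal ideal of B generated by G. -/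
/-!
Modulo `p`, every `a ∈ I` is `G b + p c`; then `p c ∈ I`, so by saturation `c` is again of the
form `G d + p e`, and `p² = 0` kills the second error term: `a = G (b + p d)`.
-/

namespace Ideal

variable {B : Type*} [CommRing B]

theorem mk_mem_span_singleton_iff_mem_sup {J : Ideal B} {x G : B} :
    Quotient.mk J x ∈ span {Quotient.mk J G} ↔ x ∈ span {G} ⊔ J := by
  rw [← Set.image_singleton, ← map_span, mem_quotient_iff_mem_sup]

theorem mul_mem_span_singleton_of_mem_sup {π G x : B} (hπ : π ^ 2 = 0)
    (hx : x ∈ span {G} ⊔ span {π}) : π * x ∈ span {G} := by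
  obtain ⟨a, b, hb, rfl⟩ := mem_span_singleton_sup.mp hx
  obtain ⟨c, rfl⟩ := mem_span_singleton.mp hb
  have hππc : π * (π * c) = 0 := by rw [← mul_assoc, ← sq, hπ, zero_mul]
  rw [mul_add, hππc, add_zero, mem_span_singleton]
  exact ⟨π * a, by ring⟩

theorem le_span_singleton_of_le_sup {π G : B} {I : Ideal B} (hπ : π ^ 2 = 0) (hG : G ∈ I)
    (hle : I ≤ span {G} ⊔ span {π})
    (hsat : ∀ x, π * x ∈ I → x ∈ span {G} ⊔ span {π}) : I ≤ span {G} := by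
  intro y hy
  obtain ⟨a, b, hb, rfl⟩ := mem_span_singleton_sup.mp (hle hy)
  obtain ⟨c, rfl⟩ := mem_span_singleton.mp hb
  have hπc : π * c ∈ I := by simpa using I.sub_mem hy (I.mul_mem_left a hG)
  exact add_mem (mul_mem_left _ a (mem_span_singleton_self G))
    (mul_mem_span_singleton_of_mem_sup hπ (hsat c hπc))

end Ideal

theorem ideal_principal_of_mod_p_principal_general (p : ℕ) (B : Type*) [CommRing B]
    (hp2 : (p : B) ^ 2 = 0) (I : Ideal B) (G : B) (hG : G ∈ I)
    (hgen : Ideal.map (Ideal.Quotient.mk (Ideal.span {(p : B)})) I =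
      Ideal.span {Ideal.Quotient.mk (Ideal.span {(p : B)}) G})
    (hsat : ∀ x : B, (p : B) * x ∈ I →
      Ideal.Quotient.mk (Ideal.span {(p : B)}) x ∈
        Ideal.map (Ideal.Quotient.mk (Ideal.span {(p : B)})) I) :
    I = Ideal.span {G} := by
  have hle : I ≤ Ideal.span {G} ⊔ Ideal.span {(p : B)} := fun a ha =>
    Ideal.mk_mem_span_singleton_iff_mem_sup.mp (hgen ▸ Ideal.mem_map_of_mem _ ha)
  refine le_antisymm (Ideal.le_span_singleton_of_le_sup hp2 hG hle fun x hx => ?_)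
    (Ideal.span_le.mpr (Set.singleton_subset_iff.mpr hG))
  exact Ideal.mk_mem_span_singleton_iff_mem_sup.mp (hgen ▸ hsat x hx)

/-- If `p² = 0` in `B`, `I` is an ideal of `B` whose image `I₀` in `B/pB` is generated by
the image of some `G ∈ I`, and `p·x ∈ I` implies that `x mod p` lies in `I₀`, then `I` is
generated by `G`. -/
theorem ideal_principal_of_mod_p_principal (p : ℕ) (hp : p.Prime) (B : Type*) [CommRing B]
    (hp2 : (p : B) ^ 2 = 0) (I : Ideal B) (G : B) (hG : G ∈ I)
    (hgen : Ideal.map (Ideal.Quotient.mk (Ideal.span {(p : B)})) I =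
      Ideal.span {Ideal.Quotient.mk (Ideal.span {(p : B)}) G})
    (hsat : ∀ x : B, (p : B) * x ∈ I →
      Ideal.Quotient.mk (Ideal.span {(p : B)}) x ∈
        Ideal.map (Ideal.Quotient.mk (Ideal.span {(p : B)})) I) :
    I = Ideal.span {G} :=
  ideal_principal_of_mod_p_principal_general p B hp2 I G hG hgen hsat
end

section
/- Let p be a prime and let e be a multivariate polynomial over ℤ in three variables x, y, z. Write f for the substitution sending (x, y, z) to (x^p, y^p, z^p), and let d be a polynomial satisfying e(f) − e^p = p·d in ℤ[x,y,z]. Then for any triple f' = (f'₁, f'₂, f'₃) of polynomials in ℤ[x,y,z] and any polynomial c ∈ ℤ[x,y,z], the following are equivalent: (i) p² divides e(f + p·f') − e^p − p·c·e in ℤ[x,y,z], where e(f + p·f') is the polynomial obtained from e by substituting x^p + p·f'₁, y^p + p·f'₂, z^p + p·f'₃ for x, y, z respectively; (ii) p divides d + (∂e/∂x)(f)·f'₁ + (∂e/∂y)(f)·f'₂ + (∂e/∂z)(f)·f'₃ − c·e in ℤ[x,y,z], where (∂e/∂x)(f) denotes the partial derivative of e with respect to x with x^p, y^p, z^p substituted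 for x, y, z, and similarly for the other partial derivatives. -/
/-! Taylor expansion to first order at `f = (x^p, y^p, z^p)` with increment `p·f'` gives
`e(f + p·f') ≡ e(f) + p·(∇e)(f)·f' (mod p²)`; substituting `e(f) = e^p + p·d`, the left-hand side
of the criterion becomes `p·(d + (∇e)(f)·f' - c·e)` modulo `p²`, and `p` can be cancelled once. -/

open MvPolynomial

theorem MvPolynomial.exists_aeval_add_mul_eq {R S σ : Type*} [CommSemiring R] [CommSemiring S]
    [Algebra R S] [Fintype σ] (e : MvPolynomial σ R) (g v : σ → S) (t : S) :
    ∃ k : S, aeval (fun i => g i + t * v i) e =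
      aeval g e + t * ∑ i, aeval g (pderiv i e) * v i + t ^ 2 * k := by
  classical
  induction e using MvPolynomial.induction_on with
  | C a => exact ⟨0, by simp⟩
  | add q r hq hr =>
    obtain ⟨kq, hkq⟩ := hq
    obtain ⟨kr, hkr⟩ := hr
    refine ⟨kq + kr, ?_⟩
    simp only [map_add, hkq, hkr, add_mul, Finset.sum_add_distrib]
    ring
  | mul_X q n hq =>
    obtain ⟨k, hk⟩ := hq
    have hderiv : ∑ i, aeval g (pderiv i (q * X n)) * v i =
        (∑ i, aeval g (pderiv i q) * v i) * g n + aeval g q * v n := by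
      simp only [pderiv_mul, pderiv_X, map_add, map_mul, aeval_X, add_mul,
        Finset.sum_add_distrib, Finset.sum_mul]
      congr 1
      · exact Finset.sum_congr rfl fun i _ => by ring
      · simp [Pi.single_apply]
    refine ⟨k * g n + (∑ i, aeval g (pderiv i q) * v i) * v n + t * k * v n, ?_⟩
    simp only [map_mul, hk, aeval_X, hderiv]
    ring

theorem sq_dvd_mul_add_sq_mul_iff {R : Type*} [Ring R] [IsLeftCancelMulZero R] {a : R}
    (ha : a ≠ 0) (x k : R) : a ^ 2 ∣ a * x + a ^ 2 * k ↔ a ∣ x := by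
  rw [dvd_add_left (dvd_mul_right _ k), sq, mul_dvd_mul_iff_left ha]

/-- Criterion for lifting Frobenius modulo `p²`: with `e ∈ ℤ[x,y,z]`,
`f = (x^p, y^p, z^p)` and `d` with `e(f) - e^p = p·d`, a triple `f' = (f'₁, f'₂, f'₃)` and
a polynomial `c` satisfy `p² ∣ e(f + p·f') - e^p - p·c·e` if and only if
`p ∣ d + (∇e)(f)·f' - c·e`. -/
theorem frobenius_lift_criterion (p : ℕ) (hp : p.Prime) (e : MvPolynomial (Fin 3) ℤ)
    (d : MvPolynomial (Fin 3) ℤ)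
    (hd : aeval (fun i => (X i : MvPolynomial (Fin 3) ℤ) ^ p) e - e ^ p =
      (p : MvPolynomial (Fin 3) ℤ) * d)
    (f' : Fin 3 → MvPolynomial (Fin 3) ℤ) (c : MvPolynomial (Fin 3) ℤ) :
    (p : MvPolynomial (Fin 3) ℤ) ^ 2 ∣
        aeval (fun i => (X i : MvPolynomial (Fin 3) ℤ) ^ p +
            (p : MvPolynomial (Fin 3) ℤ) * f' i) e -
          e ^ p - (p : MvPolynomial (Fin 3) ℤ) * c * e ↔
      (p : MvPolynomial (Fin 3) ℤ) ∣
        d + ∑ i : Fin 3,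
            aeval (fun j => (X j : MvPolynomial (Fin 3) ℤ) ^ p) (pderiv i e) * f' i -
          c * e := by
  obtain ⟨k, hk⟩ := exists_aeval_add_mul_eq e (fun i => X i ^ p) f' (p : MvPolynomial (Fin 3) ℤ)
  have hp0 : (p : MvPolynomial (Fin 3) ℤ) ≠ 0 := Nat.cast_ne_zero.mpr hp.ne_zero
  rw [← sq_dvd_mul_add_sq_mul_iff hp0 _ k]
  convert Iff.rfl using 2
  linear_combination -hk - hd
end
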